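/- arXiv:gr-qc/9705079 — 8 statements merged into one kernel-verified Lean document; each statement's English description precedes it below -/
import Mathlib

section
/- Every proper orthochronous Lorentz matrix admits a unique rotation/boost decomposition: if L is a real 4×4 matrix with L^T η L = η, det L = 1, and L₄₄ > 0, then there exist a unique R ∈ SO(3) (i.e. R^T R = I, det R = 1) and a unique w ∈ ℝ³ such that L = 𝓡(R)·𝓑(w), where 𝓡(R) = [[R,0],[0,1]] and 𝓑(w) = [[W, w],[w^T, b]] with b = √(1+‖w‖²) and W = I + ww^T/(b+1). -/
open Matrix

/-- `b = √(1+‖w‖²)`. -/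
noncomputable def bOf (w : Fin 3 → ℝ) : ℝ := Real.sqrt (1 + w ⬝ᵥ w)

/-- `W = I + w wᵀ/(b+1)`. -/
noncomputable def WOf (w : Fin 3 → ℝ) : Matrix (Fin 3) (Fin 3) ℝ :=
  1 + (bOf w + 1)⁻¹ • vecMulVec w w

/-- The Minkowski metric `η = diag(1,1,1,-1)` as a block matrix. -/
noncomputable def etaM : Matrix (Fin 3 ⊕ Fin 1) (Fin 3 ⊕ Fin 1) ℝ :=
  fromBlocks 1 0 0 (-1)

/-- The boost `𝓑(w) = [[W, w],[wᵀ, b]]`. -/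
noncomputable def boostM (w : Fin 3 → ℝ) : Matrix (Fin 3 ⊕ Fin 1) (Fin 3 ⊕ Fin 1) ℝ :=
  fromBlocks (WOf w) (fun i _ => w i) (fun _ j => w j) (fun _ _ => bOf w)

/-- The rotation `𝓡(R) = [[R, 0],[0, 1]]`. -/
noncomputable def rotM (R : Matrix (Fin 3) (Fin 3) ℝ) :
    Matrix (Fin 3 ⊕ Fin 1) (Fin 3 ⊕ Fin 1) ℝ :=
  fromBlocks R 0 0 1

/-!
The last row of a Lorentz matrix `L` is `(wᵀ, L₄₄)`, and the `(4,4)` entry of `L η Lᵀ = η` gives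
`L₄₄² = 1 + ‖w‖²`; with `L₄₄ > 0` this is exactly the last row `(wᵀ, b)` of `𝓑(w)`. Since `𝓑` is
a Lorentz matrix with inverse `𝓑(-w)`, the Lorentz matrix `L 𝓑(-w)` has last row `e₄`, and a
Lorentz matrix with last row `e₄` is `𝓡(R)` with `R` orthogonal; `det R = 1` because
`det 𝓑(w) = 1`. Conversely, the last row of `𝓡(R) 𝓑(w)` is that of `𝓑(w)`, so `w` is determined
by `L`, and then `𝓡(R) = L 𝓑(-w)` determines `R`.
-/

lemma one_le_one_add_dotProduct_self {n : Type*} [Fintype n] (w : n → ℝ) : 1 ≤ 1 + w ⬝ᵥ w :=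
  le_add_of_nonneg_right (dotProduct_self_star_nonneg w)

lemma replicateCol_neg {m ι α : Type*} [Neg α] (v : m → α) :
    replicateCol ι (-v) = -replicateCol ι v :=
  rfl

lemma replicateRow_neg {n ι α : Type*} [Neg α] (v : n → α) :
    replicateRow ι (-v) = -replicateRow ι v :=
  rfl

lemma det_one_add_vecMulVec {m R : Type*} [Fintype m] [DecidableEq m] [CommRing R] (u v : m → R) :
    det (1 + vecMulVec u v) = 1 + v ⬝ᵥ u := by
  rw [vecMulVec_eq (Fin 1), det_one_add_replicateCol_mul_replicateRow]

section Boost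

variable (w : Fin 3 → ℝ)

lemma one_le_bOf : 1 ≤ bOf w :=
  Real.one_le_sqrt.mpr (one_le_one_add_dotProduct_self w)

lemma bOf_mul_self : bOf w * bOf w = 1 + w ⬝ᵥ w :=
  Real.mul_self_sqrt (zero_le_one.trans (one_le_one_add_dotProduct_self w))

lemma bOf_eq_one_add_inv_mul_dotProduct : bOf w = 1 + (bOf w + 1)⁻¹ * (w ⬝ᵥ w) := by
  have := one_le_bOf w
  field_simp
  linear_combination bOf_mul_self w

lemma bOf_neg : bOf (-w) = bOf w := by simp [bOf]

lemma WOf_neg : WOf (-w) = WOf w := by simp [WOf, bOf_neg]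

lemma transpose_WOf : (WOf w)ᵀ = WOf w := by
  simp [WOf, transpose_vecMulVec]

lemma WOf_mulVec : WOf w *ᵥ w = bOf w • w := by
  rw [WOf, add_mulVec, one_mulVec, smul_mulVec, vecMulVec_mulVec, op_smul_eq_smul, smul_smul]
  conv_rhs => rw [bOf_eq_one_add_inv_mul_dotProduct, add_smul, one_smul]

lemma vecMul_WOf : w ᵥ* WOf w = bOf w • w := by
  rw [← mulVec_transpose, transpose_WOf, WOf_mulVec]

lemma WOf_mul_WOf : WOf w * WOf w = 1 + vecMulVec w w := by
  have := one_le_bOf w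
  have hcoeff : (bOf w + 1)⁻¹ + (bOf w + 1)⁻¹ + (bOf w + 1)⁻¹ * ((bOf w + 1)⁻¹ * (w ⬝ᵥ w)) = 1 := by
    field_simp
    linear_combination -bOf_mul_self w
  simp only [WOf, add_mul, mul_add, one_mul, mul_one, Matrix.smul_mul, Matrix.mul_smul,
    vecMulVec_mul_vecMulVec, vecMulVec_smul, smul_smul]
  linear_combination (norm := module) hcoeff • vecMulVec w w

lemma boostM_eq_fromBlocks : boostM w =
    fromBlocks (WOf w) (replicateCol (Fin 1) w) (replicateRow (Fin 1) w) (bOf w • 1) := by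
  rw [boostM]
  congr
  ext i j
  simp [Subsingleton.elim i j]

lemma transpose_boostM : (boostM w)ᵀ = boostM w := by
  simp [boostM_eq_fromBlocks, fromBlocks_transpose, transpose_WOf]

lemma etaM_mul_etaM : etaM * etaM = 1 := by
  simp [etaM, fromBlocks_multiply]

lemma etaM_mul_boostM_mul_etaM : etaM * boostM w * etaM = boostM (-w) := by
  simp [etaM, boostM_eq_fromBlocks, fromBlocks_multiply, WOf_neg, bOf_neg, replicateCol_neg,
    replicateRow_neg]

lemma boostM_mul_etaM_mul_boostM : boostM w * etaM * boostM w = etaM := by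
  rw [boostM_eq_fromBlocks, etaM, fromBlocks_multiply, fromBlocks_multiply]
  simp only [Matrix.mul_one, Matrix.mul_zero, add_zero, zero_add, Matrix.mul_neg,
    Matrix.neg_mul, Matrix.smul_mul, Matrix.mul_smul, Matrix.one_mul, smul_neg]
  congr 1
  · rw [WOf_mul_WOf]
    ext i j
    simp [mul_apply, vecMulVec_apply]
  · rw [← replicateCol_mulVec, WOf_mulVec, replicateCol_smul, add_neg_cancel]
  · rw [← replicateRow_vecMul, vecMul_WOf, replicateRow_smul, add_neg_cancel]
  · ext i j
    simp [Subsingleton.elim i j, replicateRow_mul_replicateCol, bOf_mul_self]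

lemma boostM_mul_boostM_neg : boostM w * boostM (-w) = 1 := by
  rw [← etaM_mul_boostM_mul_etaM, ← Matrix.mul_assoc, ← Matrix.mul_assoc,
    boostM_mul_etaM_mul_boostM, etaM_mul_etaM]

lemma boostM_neg_mul_boostM : boostM (-w) * boostM w = 1 := by
  simpa using boostM_mul_boostM_neg (-w)

lemma det_boostM : (boostM w).det = 1 := by
  have hb : bOf w ≠ 0 := (zero_lt_one.trans_le (one_le_bOf w)).ne'
  have hinv : (bOf w • 1 : Matrix (Fin 1) (Fin 1) ℝ) * ((bOf w)⁻¹ • 1) = 1 := by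
    rw [smul_mul_smul_comm, mul_inv_cancel₀ hb, one_smul, Matrix.mul_one]
  let := invertibleOfRightInverse _ _ hinv
  have hschur : WOf w - replicateCol (Fin 1) w * ⅟(bOf w • 1 : Matrix (Fin 1) (Fin 1) ℝ) *
      replicateRow (Fin 1) w = 1 + vecMulVec (((bOf w + 1)⁻¹ - (bOf w)⁻¹) • w) w := by
    rw [invOf_eq_right_inv hinv]
    ext i j
    simp only [WOf, Matrix.sub_apply, Matrix.add_apply, Matrix.smul_apply, smul_eq_mul,
      vecMulVec_apply, mul_apply, Fin.sum_univ_one, replicateCol_apply, replicateRow_apply,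
      Pi.smul_apply, one_apply_eq]
    ring
  rw [boostM_eq_fromBlocks, det_fromBlocks₂₂, hschur, det_one_add_vecMulVec, dotProduct_smul]
  have := one_le_bOf w
  simp only [det_unique, Fin.default_eq_zero, Matrix.smul_apply, one_apply_eq, smul_eq_mul,
    mul_one]
  field_simp
  linear_combination bOf_mul_self w

end Boost

def IsLorentz (L : Matrix (Fin 3 ⊕ Fin 1) (Fin 3 ⊕ Fin 1) ℝ) : Prop :=
  Lᵀ * etaM * L = etaM

lemma isLorentz_boostM (w : Fin 3 → ℝ) : IsLorentz (boostM w) := by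
  rw [IsLorentz, transpose_boostM, boostM_mul_etaM_mul_boostM]

lemma isLorentz_fromBlocks_zero_one {A : Matrix (Fin 3) (Fin 3) ℝ} {B : Matrix (Fin 3) (Fin 1) ℝ}
    (h : IsLorentz (fromBlocks A B 0 1)) : Aᵀ * A = 1 ∧ B = 0 := by
  obtain ⟨hA, -, -, hB⟩ : Aᵀ * A = 1 ∧ Aᵀ * B = 0 ∧ Bᵀ * A = 0 ∧ Bᵀ * B = 0 := by
    simpa [IsLorentz, etaM, fromBlocks_transpose, fromBlocks_multiply, fromBlocks_inj] using h
  exact ⟨hA, conjTranspose_mul_self_eq_zero.mp (by rwa [conjTranspose_eq_transpose_of_trivial])⟩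

def boostVec (L : Matrix (Fin 3 ⊕ Fin 1) (Fin 3 ⊕ Fin 1) ℝ) : Fin 3 → ℝ :=
  fun j => L (Sum.inr 0) (Sum.inl j)

lemma boostVec_boostM (w : Fin 3 → ℝ) : boostVec (boostM w) = w := rfl

lemma boostVec_rotM_mul (R : Matrix (Fin 3) (Fin 3) ℝ)
    (X : Matrix (Fin 3 ⊕ Fin 1) (Fin 3 ⊕ Fin 1) ℝ) : boostVec (rotM R * X) = boostVec X := by
  ext j
  simp [boostVec, rotM, mul_apply, Fintype.sum_sum_type]

namespace IsLorentz

variable {L M : Matrix (Fin 3 ⊕ Fin 1) (Fin 3 ⊕ Fin 1) ℝ}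

lemma mul (hL : IsLorentz L) (hM : IsLorentz M) : IsLorentz (L * M) :=
  calc (L * M)ᵀ * etaM * (L * M) = Mᵀ * (Lᵀ * etaM * L) * M := by
        simp only [transpose_mul, Matrix.mul_assoc]
    _ = etaM := by rw [hL, hM]

lemma mul_etaM_mul_transpose (hL : IsLorentz L) : L * etaM * Lᵀ = etaM := by
  have hleft : (etaM * Lᵀ * etaM) * L = 1 := by
    rw [Matrix.mul_assoc, Matrix.mul_assoc, ← Matrix.mul_assoc Lᵀ, hL, etaM_mul_etaM]
  calc L * etaM * Lᵀ = L * (etaM * Lᵀ * etaM) * etaM := by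
        simp only [Matrix.mul_assoc, etaM_mul_etaM, Matrix.mul_one]
    _ = etaM := by rw [mul_eq_one_comm.mp hleft, Matrix.one_mul]

lemma apply_inr_inr_mul_self (hL : IsLorentz L) :
    L (Sum.inr 0) (Sum.inr 0) * L (Sum.inr 0) (Sum.inr 0) = 1 + boostVec L ⬝ᵥ boostVec L := by
  have h : boostVec L ⬝ᵥ boostVec L - L (Sum.inr 0) (Sum.inr 0) * L (Sum.inr 0) (Sum.inr 0) =
      -1 := by
    simpa [etaM, mul_apply, Fintype.sum_sum_type, one_apply, dotProduct, boostVec, sub_eq_add_neg]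
      using congrFun (congrFun hL.mul_etaM_mul_transpose (Sum.inr 0)) (Sum.inr 0)
  linarith

lemma apply_inr_inr_eq_bOf (hL : IsLorentz L) (h44 : 0 < L (Sum.inr 0) (Sum.inr 0)) :
    L (Sum.inr 0) (Sum.inr 0) = bOf (boostVec L) := by
  rw [bOf, ← hL.apply_inr_inr_mul_self, Real.sqrt_mul_self h44.le]

lemma row_inr_eq_boostM (hL : IsLorentz L) (h44 : 0 < L (Sum.inr 0) (Sum.inr 0)) :
    L (Sum.inr 0) = boostM (boostVec L) (Sum.inr 0) := by
  ext (j | j)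
  · rfl
  · rw [Subsingleton.elim j 0, hL.apply_inr_inr_eq_bOf h44]
    rfl

lemma mul_boostM_neg_row_inr (hL : IsLorentz L) (h44 : 0 < L (Sum.inr 0) (Sum.inr 0)) :
    (L * boostM (-boostVec L)) (Sum.inr 0) =
      (1 : Matrix (Fin 3 ⊕ Fin 1) (Fin 3 ⊕ Fin 1) ℝ) (Sum.inr 0) := by
  rw [mul_apply_eq_vecMul, hL.row_inr_eq_boostM h44, ← mul_apply_eq_vecMul,
    boostM_mul_boostM_neg]

lemma exists_eq_rotM (hM : IsLorentz M)
    (hrow : M (Sum.inr 0) = (1 : Matrix (Fin 3 ⊕ Fin 1) (Fin 3 ⊕ Fin 1) ℝ) (Sum.inr 0)) :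
    ∃ R, M = rotM R ∧ Rᵀ * R = 1 := by
  have hrow' (i : Fin 1) :
      M (Sum.inr i) = (1 : Matrix (Fin 3 ⊕ Fin 1) (Fin 3 ⊕ Fin 1) ℝ) (Sum.inr i) := by
    rw [Subsingleton.elim i 0, hrow]
  have hblocks : M = fromBlocks M.toBlocks₁₁ M.toBlocks₁₂ 0 1 := by
    conv_lhs => rw [← fromBlocks_toBlocks M]
    congr <;> ext i j <;> simp [toBlocks₂₁, toBlocks₂₂, hrow', one_apply]
  obtain ⟨hA, hB⟩ := isLorentz_fromBlocks_zero_one (hblocks ▸ hM)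
  refine ⟨M.toBlocks₁₁, ?_, hA⟩
  conv_lhs => rw [hblocks, hB]
  rfl

end IsLorentz

lemma det_rotM (R : Matrix (Fin 3) (Fin 3) ℝ) : (rotM R).det = R.det := by
  rw [rotM, det_fromBlocks_zero₂₁, det_one, mul_one]

lemma rotM_injective : Function.Injective rotM := fun R R' h => by
  simpa [rotM] using congrArg toBlocks₁₁ h

lemma eq_rotM_mul_boostM_iff {L : Matrix (Fin 3 ⊕ Fin 1) (Fin 3 ⊕ Fin 1) ℝ}
    {R : Matrix (Fin 3) (Fin 3) ℝ} {w : Fin 3 → ℝ} :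
    L = rotM R * boostM w ↔ w = boostVec L ∧ rotM R = L * boostM (-w) := by
  constructor
  · rintro rfl
    rw [boostVec_rotM_mul, boostVec_boostM, Matrix.mul_assoc, boostM_mul_boostM_neg,
      Matrix.mul_one]
    exact ⟨rfl, rfl⟩
  · rintro ⟨-, hR⟩
    rw [hR, Matrix.mul_assoc, boostM_neg_mul_boostM, Matrix.mul_one]

/-- every proper orthochronous Lorentz matrix `L` has a unique
decomposition `L = 𝓡(R)·𝓑(w)` with `R ∈ SO(3)` and `w ∈ ℝ³`. -/
theorem lorentz_rotation_boost_decomposition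
    (L : Matrix (Fin 3 ⊕ Fin 1) (Fin 3 ⊕ Fin 1) ℝ)
    (hL : Lᵀ * etaM * L = etaM) (hdet : L.det = 1)
    (hL44 : 0 < L (Sum.inr 0) (Sum.inr 0)) :
    ∃! p : Matrix (Fin 3) (Fin 3) ℝ × (Fin 3 → ℝ),
      (p.1ᵀ * p.1 = 1 ∧ p.1.det = 1) ∧ L = rotM p.1 * boostM p.2 := by
  have hLor : IsLorentz L := hL
  set w := boostVec L
  obtain ⟨R, hR, hRorth⟩ :=
    (hLor.mul (isLorentz_boostM (-w))).exists_eq_rotM (hLor.mul_boostM_neg_row_inr hL44)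
  have hRdet : R.det = 1 := by
    rw [← det_rotM, ← hR, det_mul, hdet, det_boostM, one_mul]
  refine ⟨(R, w), ⟨⟨hRorth, hRdet⟩, eq_rotM_mul_boostM_iff.2 ⟨rfl, hR.symm⟩⟩, ?_⟩
  rintro ⟨R', w'⟩ ⟨-, hdecomp⟩
  obtain ⟨rfl, hR'⟩ := eq_rotM_mul_boostM_iff.1 hdecomp
  exact Prod.ext (rotM_injective (hR'.trans hR)) rfl
end

section
/- Let w ∈ ℝ³ and θ ∈ ℝ³ with ‖θ‖ = 1, and set b = √(1+‖w‖²), f = b + θ^T w, and A = I − f^{-1}(θ + (b+1)^{-1}w)w^T. Then A^T A = I − f^{-1}(wθ^T + θw^T). -/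
/-!
Write `A = 1 - c • u wᵀ` with `c = f⁻¹` and `u = θ + (b+1)⁻¹ w`. Then
`AᵀA = 1 - c (w uᵀ + u wᵀ) + c² ‖u‖² w wᵀ`, and the choice of `u` makes `‖u‖² = 2 f / (b+1)`
(using `‖θ‖ = 1` and `b² - 1 = ‖w‖²`), so the `w wᵀ` terms cancel exactly.
-/

open Matrix

/-- `f = b + θᵀw`. -/
noncomputable def fOf (θ w : Fin 3 → ℝ) : ℝ := bOf w + θ ⬝ᵥ w

/-- `A = I − f⁻¹ (θ + (b+1)⁻¹ w) wᵀ`. -/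
noncomputable def AOf (θ w : Fin 3 → ℝ) : Matrix (Fin 3) (Fin 3) ℝ :=
  1 - (fOf θ w)⁻¹ • vecMulVec (θ + (bOf w + 1)⁻¹ • w) w

namespace Matrix

theorem transpose_mul_self_one_sub_smul_vecMulVec {n R : Type*} [Fintype n] [DecidableEq n]
    [CommRing R] (c : R) (u w : n → R) :
    (1 - c • vecMulVec u w)ᵀ * (1 - c • vecMulVec u w)
      = 1 - c • (vecMulVec w u + vecMulVec u w) + (c * c * (u ⬝ᵥ u)) • vecMulVec w w := by
  rw [transpose_sub, transpose_one, transpose_smul, transpose_vecMulVec]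
  simp only [sub_mul, mul_sub, one_mul, mul_one, smul_mul_smul_comm, vecMulVec_mul_vecMulVec,
    vecMulVec_smul]
  module

theorem dotProduct_self_add_inv_add_one_smul {n K : Type*} [Fintype n] [Field K]
    {θ w : n → K} {b : K} (hθ : θ ⬝ᵥ θ = 1) (hb : b ^ 2 = 1 + w ⬝ᵥ w) (hb₁ : b + 1 ≠ 0) :
    (θ + (b + 1)⁻¹ • w) ⬝ᵥ (θ + (b + 1)⁻¹ • w) = 2 * (b + 1)⁻¹ * (b + θ ⬝ᵥ w) := by
  simp only [add_dotProduct, dotProduct_add, smul_dotProduct, dotProduct_smul, smul_eq_mul,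
    dotProduct_comm w θ, hθ]
  field_simp
  linear_combination -hb

end Matrix

/-- `AᵀA = I − f⁻¹ (wθᵀ + θwᵀ)`. -/
theorem ATA_eq (w θ : Fin 3 → ℝ) (hθ : Real.sqrt (θ ⬝ᵥ θ) = 1) :
    (AOf θ w)ᵀ * AOf θ w
      = 1 - (fOf θ w)⁻¹ • (vecMulVec w θ + vecMulVec θ w) := by
  have hw : 0 ≤ w ⬝ᵥ w := Finset.sum_nonneg fun i _ => mul_self_nonneg (w i)
  have hb : bOf w ^ 2 = 1 + w ⬝ᵥ w := Real.sq_sqrt (by linarith)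
  have hb₁ : bOf w + 1 ≠ 0 := by unfold bOf; positivity
  set f := fOf θ w
  set g := (bOf w + 1)⁻¹
  have hu : (θ + g • w) ⬝ᵥ (θ + g • w) = 2 * g * f :=
    dotProduct_self_add_inv_add_one_smul (Real.sqrt_eq_one.mp hθ) hb hb₁
  have hcoef : f⁻¹ * f⁻¹ * (2 * g * f) = 2 * (f⁻¹ * g) := by
    -- holds even when `f = 0`, since then `f⁻¹ = 0`
    have hf : f⁻¹ * f * f⁻¹ = f⁻¹ := by
      simpa only [inv_inv] using mul_inv_mul_cancel f⁻¹
    linear_combination 2 * g * hf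
  rw [AOf, transpose_mul_self_one_sub_smul_vecMulVec, hu, hcoef]
  simp only [vecMulVec_add, add_vecMulVec, vecMulVec_smul, smul_vecMulVec]
  module
end

section
/- Let w ∈ ℝ³ and θ ∈ ℝ³ with ‖θ‖ = 1, and set b = √(1+‖w‖²), f = b + θ^T w, Θ = I − θθ^T, and A = I − f^{-1}(θ + (b+1)^{-1}w)w^T. Then Θ A^T A Θ = Θ. -/
open Matrix

/-- `Θ = I − θθᵀ`. -/
noncomputable def ThetaOf (θ : Fin 3 → ℝ) : Matrix (Fin 3) (Fin 3) ℝ :=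
  1 - vecMulVec θ θ

lemma vmv_mul_vmv (x y z t : Fin 3 → ℝ) :
    vecMulVec x y * vecMulVec z t = (y ⬝ᵥ z) • vecMulVec x t := by
  ext i j
  simp [Matrix.mul_apply, vecMulVec_apply, dotProduct, Fin.sum_univ_three, smul_eq_mul]
  ring

lemma vmv_transpose (x y : Fin 3 → ℝ) :
    (vecMulVec x y)ᵀ = vecMulVec y x := by
  ext i j; simp [vecMulVec_apply, Matrix.transpose_apply, mul_comm]

lemma vmv_smul_left (c : ℝ) (x y : Fin 3 → ℝ) :
    vecMulVec (c • x) y = c • vecMulVec x y := by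
  ext i j; simp [vecMulVec_apply, smul_eq_mul]; ring

lemma vmv_smul_right (c : ℝ) (x y : Fin 3 → ℝ) :
    vecMulVec x (c • y) = c • vecMulVec x y := by
  ext i j; simp [vecMulVec_apply, smul_eq_mul]; ring

/-- Sandwiching a rank-one matrix between two copies of `Θ`. -/
lemma sandwich (θ x y : Fin 3 → ℝ) :
    (1 - vecMulVec θ θ) * vecMulVec x y * (1 - vecMulVec θ θ)
      = vecMulVec (x - (θ ⬝ᵥ x) • θ) (y - (θ ⬝ᵥ y) • θ) := by
  ext i j
  fin_cases i <;> fin_cases j <;>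
    · simp [Matrix.mul_apply, Matrix.sub_apply, Matrix.one_apply, vecMulVec_apply,
        dotProduct, Fin.sum_univ_three, smul_eq_mul]
      ring

/-- `Θ Aᵀ A Θ = Θ`. -/
theorem Theta_ATA_Theta (w θ : Fin 3 → ℝ) (hθ : Real.sqrt (θ ⬝ᵥ θ) = 1) :
    ThetaOf θ * (AOf θ w)ᵀ * AOf θ w * ThetaOf θ = ThetaOf θ := by
  have hθ2 : θ ⬝ᵥ θ = 1 := Real.sqrt_eq_one.mp hθ
  set s : ℝ := θ ⬝ᵥ w with hs
  set p : ℝ := w ⬝ᵥ w with hp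
  have hp0 : 0 ≤ p := by
    simp only [hp, dotProduct, Fin.sum_univ_three]
    nlinarith [mul_self_nonneg (w 0), mul_self_nonneg (w 1), mul_self_nonneg (w 2)]
  set b : ℝ := bOf w with hbdef
  have hb2 : b ^ 2 = 1 + p := Real.sq_sqrt (by linarith)
  have hb1 : 1 ≤ b := by
    have h1 := Real.sqrt_le_sqrt (show (1:ℝ) ≤ 1 + p by linarith)
    rwa [Real.sqrt_one] at h1
  have hcs : s ^ 2 ≤ p := by
    have h1 := hθ2
    simp only [hs, hp, dotProduct, Fin.sum_univ_three] at h1 ⊢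
    nlinarith [sq_nonneg (θ 0 * w 1 - θ 1 * w 0), sq_nonneg (θ 0 * w 2 - θ 2 * w 0),
      sq_nonneg (θ 1 * w 2 - θ 2 * w 1)]
  set f : ℝ := fOf θ w with hfdef
  have hfe : f = b + s := rfl
  have hfpos : 0 < f := by
    have h1 : s ^ 2 < b ^ 2 := by nlinarith
    have h2 : |s| < b := abs_lt_of_sq_lt_sq h1 (by linarith)
    have h3 := neg_abs_le s
    rw [hfe]; linarith
  have hf0 : f ≠ 0 := ne_of_gt hfpos
  have hb10 : b + 1 ≠ 0 := by linarith
  set c : ℝ := (b + 1)⁻¹ with hc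
  set u : Fin 3 → ℝ := θ + c • w with hu
  set q : Fin 3 → ℝ := w - s • θ with hq
  have hA : AOf θ w = 1 - f⁻¹ • vecMulVec u w := rfl
  have hAT : (AOf θ w)ᵀ = 1 - f⁻¹ • vecMulVec w u := by
    rw [hA, Matrix.transpose_sub, Matrix.transpose_one, Matrix.transpose_smul, vmv_transpose]
  have huu : u ⬝ᵥ u = 1 + 2 * c * s + c ^ 2 * p := by
    rw [hu]
    simp only [dotProduct_add, add_dotProduct, dotProduct_smul, smul_dotProduct,
      smul_eq_mul, hθ2]
    rw [dotProduct_comm w θ, ← hs, ← hp]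
    ring
  have hθu : θ ⬝ᵥ u = 1 + c * s := by
    rw [hu]
    simp only [dotProduct_add, dotProduct_smul, smul_eq_mul, hθ2, ← hs]
  have huq : u - (θ ⬝ᵥ u) • θ = c • q := by
    rw [hθu, hu, hq]
    module
  have hwq : w - (θ ⬝ᵥ w) • θ = q := by rw [← hs, hq]
  have hΘ : ThetaOf θ = 1 - vecMulVec θ θ := rfl
  -- expand AᵀA
  have expand : (AOf θ w)ᵀ * AOf θ w
      = 1 - f⁻¹ • vecMulVec u w - f⁻¹ • vecMulVec w u
        + (f⁻¹ * f⁻¹ * (u ⬝ᵥ u)) • vecMulVec w w := by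
    rw [hAT, hA]
    simp only [Matrix.sub_mul, Matrix.mul_sub, Matrix.one_mul, Matrix.mul_one,
      Matrix.smul_mul, Matrix.mul_smul, vmv_mul_vmv, smul_smul]
    module
  -- sandwiched rank-one pieces
  have sθ1 : (1 - vecMulVec θ θ) * vecMulVec u w * (1 - vecMulVec θ θ)
      = c • vecMulVec q q := by
    rw [sandwich, huq, hwq, vmv_smul_left]
  have sθ2 : (1 - vecMulVec θ θ) * vecMulVec w u * (1 - vecMulVec θ θ)
      = c • vecMulVec q q := by
    rw [sandwich, huq, hwq, vmv_smul_right]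
  have sθ3 : (1 - vecMulVec θ θ) * vecMulVec w w * (1 - vecMulVec θ θ)
      = vecMulVec q q := by
    rw [sandwich, hwq]
  have hΘΘ : ThetaOf θ * ThetaOf θ = ThetaOf θ := by
    simp only [hΘ, sub_mul, mul_sub, one_mul, mul_one, vmv_mul_vmv, hθ2, one_smul]
    abel
  have key : ThetaOf θ * (AOf θ w)ᵀ * AOf θ w * ThetaOf θ
      = ThetaOf θ * ThetaOf θ
        + (- (f⁻¹ * c) - (f⁻¹ * c) + f⁻¹ * f⁻¹ * (u ⬝ᵥ u)) • vecMulVec q q := by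
    have assoc : ThetaOf θ * (AOf θ w)ᵀ * AOf θ w * ThetaOf θ
        = ThetaOf θ * ((AOf θ w)ᵀ * AOf θ w) * ThetaOf θ := by
      rw [Matrix.mul_assoc (ThetaOf θ), ← Matrix.mul_assoc (ThetaOf θ)]
    rw [assoc, expand, hΘ]
    have distr : (1 - vecMulVec θ θ) * (1 - f⁻¹ • vecMulVec u w - f⁻¹ • vecMulVec w u
          + (f⁻¹ * f⁻¹ * (u ⬝ᵥ u)) • vecMulVec w w) * (1 - vecMulVec θ θ)
        = (1 - vecMulVec θ θ) * 1 * (1 - vecMulVec θ θ)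
          - f⁻¹ • ((1 - vecMulVec θ θ) * vecMulVec u w * (1 - vecMulVec θ θ))
          - f⁻¹ • ((1 - vecMulVec θ θ) * vecMulVec w u * (1 - vecMulVec θ θ))
          + (f⁻¹ * f⁻¹ * (u ⬝ᵥ u)) • ((1 - vecMulVec θ θ) * vecMulVec w w
              * (1 - vecMulVec θ θ)) := by
      simp only [Matrix.mul_sub, Matrix.mul_add, Matrix.sub_mul, Matrix.add_mul,
        Matrix.mul_smul, Matrix.smul_mul, smul_sub, smul_smul]
      module
    rw [distr, sθ1, sθ2, sθ3, Matrix.mul_one]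
    module
  have h2cf : u ⬝ᵥ u = 2 * c * f := by
    rw [huu, hfe]
    have hbc : (b + 1) * c = 1 := mul_inv_cancel₀ hb10
    have hcb : c * (b + 1) = 1 := by rw [mul_comm] at hbc; exact hbc
    linear_combination (c * b - c - 1) * hcb - c ^ 2 * hb2
  have hκ : - (f⁻¹ * c) - (f⁻¹ * c) + f⁻¹ * f⁻¹ * (u ⬝ᵥ u) = 0 := by
    rw [h2cf]
    have hff : f⁻¹ * f = 1 := inv_mul_cancel₀ hf0
    linear_combination (2 * c * f⁻¹) * hff
  rw [key, hΘΘ, hκ, zero_smul, add_zero]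
end

section
/- Let w ∈ ℝ³, let θ ∈ ℝ³ with ‖θ‖ = 1, set b = √(1+‖w‖²), f = b + θ^T w, A = I − f^{-1}(θ + (b+1)^{-1}w)w^T, and let R be a 3×3 matrix with R^T R = I. Then for every v ∈ ℝ³ with θ^T v = 0 one has ‖R A v‖ = ‖v‖; that is, RA acts isometrically on the tangent plane to the unit sphere at θ. -/
open Matrix

/-! We have `Av = v - k u` with `u = θ + (b+1)⁻¹ w` and `k = f⁻¹ (wᵀv)`. Because `b² = 1 + ‖w‖²`,
`‖u‖² = 2f/(b+1)`, and for `v ⊥ θ` also `uᵀv = (wᵀv)/(b+1)`; hence in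
`‖v - k u‖² = ‖v‖² - 2k uᵀv + k² ‖u‖²` the last two terms cancel. An orthogonal `R` preserves norms. -/

namespace Matrix

variable {ι K : Type*} [Fintype ι]

theorem dotProduct_mulVec_self_of_transpose_mul_self [DecidableEq ι] {R : Type*} [CommSemiring R]
    {M : Matrix ι ι R} (hM : Mᵀ * M = 1) (x : ι → R) :
    (M *ᵥ x) ⬝ᵥ (M *ᵥ x) = x ⬝ᵥ x := by
  rw [dotProduct_mulVec, ← mulVec_transpose, mulVec_mulVec, hM, one_mulVec]

variable [Field K] {θ w : ι → K} {b : K}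

theorem dotProduct_self_add_smul_of_sq_eq (hθ : θ ⬝ᵥ θ = 1) (hb : b ^ 2 = 1 + w ⬝ᵥ w)
    (hb1 : b + 1 ≠ 0) :
    (θ + (b + 1)⁻¹ • w) ⬝ᵥ (θ + (b + 1)⁻¹ • w) = 2 * (b + θ ⬝ᵥ w) / (b + 1) := by
  simp only [dotProduct_add, add_dotProduct, dotProduct_smul, smul_dotProduct, smul_eq_mul, hθ,
    dotProduct_comm w θ, ← sub_eq_of_eq_add' hb]
  field_simp
  ring

theorem dotProduct_self_sub_smul_of_sq_eq (hθ : θ ⬝ᵥ θ = 1) (hb : b ^ 2 = 1 + w ⬝ᵥ w)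
    (hb1 : b + 1 ≠ 0) {v : ι → K} (hv : θ ⬝ᵥ v = 0) :
    let u := v - ((b + θ ⬝ᵥ w)⁻¹ * (w ⬝ᵥ v)) • (θ + (b + 1)⁻¹ • w)
    u ⬝ᵥ u = v ⬝ᵥ v := by
  intro u
  set f := b + θ ⬝ᵥ w
  set s := w ⬝ᵥ v
  have hu : (θ + (b + 1)⁻¹ • w) ⬝ᵥ v = s / (b + 1) := by
    simp only [add_dotProduct, smul_dotProduct, smul_eq_mul, hv, s]
    ring
  have hf : f⁻¹ * f⁻¹ * f = f⁻¹ := by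
    rcases eq_or_ne f 0 with h | h
    · simp [h]
    · field_simp
  have key := dotProduct_self_add_smul_of_sq_eq hθ hb hb1
  simp only [u, sub_dotProduct, dotProduct_sub, smul_dotProduct, dotProduct_smul, smul_eq_mul,
    key, hu, dotProduct_comm v (θ + (b + 1)⁻¹ • w)]
  linear_combination (2 * s ^ 2 / (b + 1)) * hf

end Matrix

theorem AOf_mulVec (θ w v : Fin 3 → ℝ) :
    AOf θ w *ᵥ v = v - ((fOf θ w)⁻¹ * (w ⬝ᵥ v)) • (θ + (bOf w + 1)⁻¹ • w) := by
  rw [AOf, sub_mulVec, one_mulVec, smul_mulVec, vecMulVec_mulVec, op_smul_eq_smul, smul_smul]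

theorem sq_bOf (w : Fin 3 → ℝ) : bOf w ^ 2 = 1 + w ⬝ᵥ w :=
  Real.sq_sqrt (by simpa using add_nonneg zero_le_one (dotProduct_self_star_nonneg w))

/-- for `R` orthogonal, `RA` acts isometrically on the tangent
plane to the unit sphere at `θ`: if `θᵀv = 0` then `‖RAv‖ = ‖v‖`. -/
theorem RA_isometric_on_tangent (w θ : Fin 3 → ℝ) (hθ : Real.sqrt (θ ⬝ᵥ θ) = 1)
    (R : Matrix (Fin 3) (Fin 3) ℝ) (hR : Rᵀ * R = 1)
    (v : Fin 3 → ℝ) (hv : θ ⬝ᵥ v = 0) :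
    Real.sqrt ((R *ᵥ (AOf θ w *ᵥ v)) ⬝ᵥ (R *ᵥ (AOf θ w *ᵥ v)))
      = Real.sqrt (v ⬝ᵥ v) := by
  have hθθ : θ ⬝ᵥ θ = 1 := Real.sqrt_eq_one.mp hθ
  have hb1 : bOf w + 1 ≠ 0 := (add_pos_of_nonneg_of_pos (Real.sqrt_nonneg _) one_pos).ne'
  rw [dotProduct_mulVec_self_of_transpose_mul_self hR, AOf_mulVec]
  exact congrArg Real.sqrt (dotProduct_self_sub_smul_of_sq_eq hθθ (sq_bOf w) hb1 hv)
end

section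
/- (Lemma 2.) Let s, t, w, w̃, σ ∈ ℝ³, let b = √(1+‖w‖²), and let W^{-1} denote the 3×3 matrix I − ww^T/(b(b+1)). Then the pair of equations t = b^{-1} w × σ + W^{-1} w̃ and s = σ + (b+1)^{-1} w̃ × w holds if and only if the pair of equations w̃ = b t + s × w and σ = b W^{-1} s + (b/(b+1)) w × t holds. -/
open Matrix

/-- `W⁻¹ = I − w wᵀ/(b(b+1))`. -/
noncomputable def WinvOf (w : Fin 3 → ℝ) : Matrix (Fin 3) (Fin 3) ℝ :=
  1 - (bOf w * (bOf w + 1))⁻¹ • vecMulVec w w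

/-!
The first pair of equations says `(t, s) = F (σ, w̃)` and the second `(σ, w̃) = G (t, s)` for two
linear endomorphisms `F`, `G` of `ℝ³ × ℝ³`, so it suffices that `F` and `G` are mutually inverse.
In finite dimension a left inverse is two-sided, and `G ∘ F = id` is a direct computation from
`W⁻¹ x = x - (w ⬝ x)/(b(b+1)) w`, the expansion of the vector triple product and `‖w‖² = b² - 1`.
-/

lemma one_add_dotProduct_self_pos (w : Fin 3 → ℝ) : 0 < 1 + w ⬝ᵥ w := by
  have := dotProduct_star_self_nonneg w
  rw [star_trivial] at this
  linarith

lemma bOf_pos (w : Fin 3 → ℝ) : 0 < bOf w :=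
  Real.sqrt_pos.2 (one_add_dotProduct_self_pos w)

lemma dotProduct_self_eq_bOf_sq (w : Fin 3 → ℝ) : w ⬝ᵥ w = bOf w ^ 2 - 1 := by
  rw [bOf, Real.sq_sqrt (one_add_dotProduct_self_pos w).le]
  ring

lemma WinvOf_mulVec (w x : Fin 3 → ℝ) :
    WinvOf w *ᵥ x = x - ((bOf w * (bOf w + 1))⁻¹ * (w ⬝ᵥ x)) • w := by
  simp [WinvOf, sub_mulVec, smul_mulVec, vecMulVec_mulVec, smul_smul]

section

variable (w : Fin 3 → ℝ)

local notation "V" => Fin 3 → ℝ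

noncomputable def sigmaWtToTS : Module.End ℝ (V × V) :=
  (((bOf w)⁻¹ • crossProduct w).coprod (WinvOf w).mulVecLin).prod
    (LinearMap.id.coprod ((bOf w + 1)⁻¹ • crossProduct.flip w))

noncomputable def tsToSigmaWt : Module.End ℝ (V × V) :=
  (((bOf w / (bOf w + 1)) • crossProduct w).coprod (bOf w • (WinvOf w).mulVecLin)).prod
    ((bOf w • LinearMap.id).coprod (crossProduct.flip w))

lemma sigmaWtToTS_apply (σ wt : V) :
    sigmaWtToTS w (σ, wt) =
      ((bOf w)⁻¹ • w ⨯₃ σ + WinvOf w *ᵥ wt, σ + (bOf w + 1)⁻¹ • wt ⨯₃ w) :=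
  rfl

lemma tsToSigmaWt_apply (t s : V) :
    tsToSigmaWt w (t, s) =
      ((bOf w / (bOf w + 1)) • w ⨯₃ t + bOf w • (WinvOf w *ᵥ s), bOf w • t + s ⨯₃ w) :=
  rfl

lemma tsToSigmaWt_comp_sigmaWtToTS : tsToSigmaWt w ∘ₗ sigmaWtToTS w = LinearMap.id := by
  have hb := bOf_pos w
  refine LinearMap.ext fun ⟨σ, wt⟩ => ?_
  simp only [LinearMap.comp_apply, sigmaWtToTS_apply, tsToSigmaWt_apply, LinearMap.id_apply,
    Prod.mk.injEq, WinvOf_mulVec, map_add, map_sub, map_smul, LinearMap.add_apply,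
    LinearMap.smul_apply, cross_cross_eq_smul_sub_smul, cross_cross_eq_smul_sub_smul',
    cross_self, dot_cross_self, dotProduct_add, dotProduct_smul, dotProduct_self_eq_bOf_sq,
    smul_eq_mul, smul_add, smul_sub, smul_smul, smul_zero, mul_zero, add_zero, sub_zero]
  rw [← cross_anticomm wt w, ← cross_anticomm σ w, dotProduct_comm wt w]
  constructor <;> match_scalars <;> field_simp <;> ring

lemma sigmaWtToTS_comp_tsToSigmaWt : sigmaWtToTS w ∘ₗ tsToSigmaWt w = LinearMap.id :=
  (LinearMap.comp_eq_id_comm ℝ _).mp (tsToSigmaWt_comp_sigmaWtToTS w)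

lemma eq_sigmaWtToTS_iff (σ wt t s : V) :
    (t, s) = sigmaWtToTS w (σ, wt) ↔ tsToSigmaWt w (t, s) = (σ, wt) :=
  (LinearEquiv.ofLinearMap _ _ (tsToSigmaWt_comp_sigmaWtToTS w)
    (sigmaWtToTS_comp_tsToSigmaWt w) : (V × V) ≃ₗ[ℝ] V × V).eq_symm_apply

end

/-- Lemma 2: the equations
`t = b⁻¹ w×σ + W⁻¹w̃` and `s = σ + (b+1)⁻¹ w̃×w`
hold iff
`w̃ = b t + s×w` and `σ = b W⁻¹s + (b/(b+1)) w×t`. -/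
theorem lemma2_inversion (s t w wt σ : Fin 3 → ℝ) :
    (t = (bOf w)⁻¹ • crossProduct w σ + WinvOf w *ᵥ wt ∧
      s = σ + (bOf w + 1)⁻¹ • crossProduct wt w)
    ↔ (wt = bOf w • t + crossProduct s w ∧
        σ = bOf w • (WinvOf w *ᵥ s) + (bOf w / (bOf w + 1)) • crossProduct w t) := by
  have key := eq_sigmaWtToTS_iff w σ wt t s
  rw [sigmaWtToTS_apply, tsToSigmaWt_apply, Prod.mk.injEq, Prod.mk.injEq] at key
  rw [key, add_comm, and_comm, eq_comm (b := σ), eq_comm (b := wt)]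
end

section
/- (Global solvability of the boost equation, part of Proposition 3.) Let s₁, t₁ : (0,∞) → ℝ³ be continuous, let r₀ > 0 and w₀ ∈ ℝ³. Then there exists a unique differentiable function w : (0,∞) → ℝ³ such that w(r₀) = w₀ and, for every r > 0, w'(r) = √(1+‖w(r)‖²) · t₁(r) + s₁(r) × w(r). In particular the solution does not blow up in finite time: it is defined on all of (0,∞). -/
/-!
The right-hand side `√(1 + ‖w‖²) t₁(r) + s₁(r) × w` is Lipschitz in `w`, uniformly for `r` in
a compact subinterval of `(0, ∞)`, hence of at most linear growth in `w`. By Grönwall, solutions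
on such an interval then stay in a ball fixed in advance, so truncating the field outside a
larger ball changes no solution; Picard–Lindelöf for the bounded truncated field gives a solution
on the whole interval. Uniqueness makes the solutions on an exhausting family of intervals agree,
and they patch together to the solution on `(0, ∞)`.
-/

open Set Matrix
open scoped NNReal Topology

section Retraction
variable {E : Type*} [NormedAddCommGroup E] [NormedSpace ℝ E] {R : ℝ}

noncomputable def radialRetraction (R : ℝ) (x : E) : E := (R / max R ‖x‖) • x

lemma lipschitzWith_radialRetraction (hR : 0 < R) :
    LipschitzWith 2 (radialRetraction (E := E) R) := by
  refine LipschitzWith.of_dist_le_mul fun x y => ?_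
  have hdiff : |max R ‖y‖ - max R ‖x‖| ≤ ‖x - y‖ := by
    rw [abs_sub_comm, max_comm R, max_comm R]
    exact (abs_max_sub_max_le_abs _ _ R).trans (abs_norm_sub_norm_le x y)
  set mx := max R ‖x‖
  set my := max R ‖y‖
  have hmx : R ≤ mx := le_max_left _ _
  have hmy : R ≤ my := le_max_left _ _
  have hy : ‖y‖ ≤ my := le_max_right _ _
  have hmx0 : mx ≠ 0 := (hR.trans_le hmx).ne'
  have hmy0 : my ≠ 0 := (hR.trans_le hmy).ne'
  have hsplit : radialRetraction R x - radialRetraction R y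
      = (R / mx) • (x - y) + (R * (my - mx) / (mx * my)) • y := by
    rw [radialRetraction, radialRetraction,
      show R / my = R / mx - R * (my - mx) / (mx * my) by field_simp; ring]
    module
  have h1 : ‖(R / mx) • (x - y)‖ ≤ ‖x - y‖ := by
    rw [norm_smul, Real.norm_of_nonneg (by positivity)]
    exact mul_le_of_le_one_left (norm_nonneg _) ((div_le_one (by linarith)).2 hmx)
  have h2 : ‖(R * (my - mx) / (mx * my)) • y‖ ≤ ‖x - y‖ := by
    rw [norm_smul, Real.norm_eq_abs, abs_div, abs_mul, abs_of_pos hR,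
      abs_of_pos (by positivity : 0 < mx * my), div_mul_eq_mul_div, div_le_iff₀ (by positivity)]
    calc R * |my - mx| * ‖y‖ ≤ mx * ‖x - y‖ * my := by gcongr
      _ = ‖x - y‖ * (mx * my) := by ring
  rw [dist_eq_norm, dist_eq_norm, hsplit, NNReal.coe_two, two_mul]
  exact (norm_add_le _ _).trans (add_le_add h1 h2)

lemma radialRetraction_of_norm_le (hR : 0 < R) {x : E} (hx : ‖x‖ ≤ R) :
    radialRetraction R x = x := by
  rw [radialRetraction, max_eq_left hx, div_self hR.ne', one_smul]

lemma norm_radialRetraction (hR : 0 < R) (x : E) : ‖radialRetraction R x‖ = min R ‖x‖ := by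
  have hm : 0 < max R ‖x‖ := lt_max_of_lt_left hR
  rw [radialRetraction, norm_smul, Real.norm_of_nonneg (by positivity), div_mul_eq_mul_div,
    div_eq_iff hm.ne', min_mul_max]

end Retraction

section Gronwall
variable {E : Type*} [NormedAddCommGroup E] [NormedSpace ℝ E] {v : ℝ → E → E} {y : ℝ → E}
  {a b t₀ K M : ℝ}

lemma IsIntegralCurveOn.norm_le_gronwallBound_Icc (hy : IsIntegralCurveOn y v (Icc a b))
    (hv : ∀ t ∈ Icc a b, ‖v t (y t)‖ ≤ K * ‖y t‖ + M) :
    ∀ t ∈ Icc a b, ‖y t‖ ≤ gronwallBound ‖y a‖ K M (t - a) :=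
  norm_le_gronwallBound_of_norm_deriv_right_le hy.continuousOn
    (fun t ht => (hy t (Ico_subset_Icc_self ht)).mono_of_mem_nhdsWithin
      (Icc_mem_nhdsGE_of_mem ht))
    le_rfl (fun t ht => hv t (Ico_subset_Icc_self ht))

lemma IsIntegralCurveOn.norm_le_gronwallBound_Icc_of_mem (hK : 0 ≤ K) (hM : 0 ≤ M)
    (hy : IsIntegralCurveOn y v (Icc a b)) (hv : ∀ t ∈ Icc a b, ‖v t (y t)‖ ≤ K * ‖y t‖ + M)
    (ht₀ : t₀ ∈ Icc a b) :
    ∀ t ∈ Icc a b, ‖y t‖ ≤ gronwallBound ‖y t₀‖ K M (b - a) := by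
  intro t ht
  have hmono := gronwallBound_mono (norm_nonneg (y t₀)) hM hK
  rcases le_total t₀ t with h | h
  · have hsub : Icc t₀ b ⊆ Icc a b := Icc_subset_Icc_left ht₀.1
    calc ‖y t‖ ≤ gronwallBound ‖y t₀‖ K M (t - t₀) :=
          (hy.mono hsub).norm_le_gronwallBound_Icc (fun s hs => hv s (hsub hs)) t ⟨h, ht.2⟩
      _ ≤ _ := hmono (by linarith [ht.2, ht₀.1])
  · have hsub : Icc (-t₀) (-a) ⊆ {s | s * -1 ∈ Icc a b} := fun s hs =>
      ⟨by linarith [hs.2], by linarith [hs.1, ht₀.2]⟩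
    have hrev := (hy.comp_mul (-1)).mono hsub
    have := hrev.norm_le_gronwallBound_Icc (fun s hs => by
      simpa using hv (s * -1) (hsub hs)) (-t) ⟨neg_le_neg h, neg_le_neg ht.1⟩
    simp only [Function.comp_apply, mul_neg, mul_one, neg_neg, sub_neg_eq_add] at this
    exact this.trans (hmono (by linarith [ht.1, ht₀.2]))

end Gronwall

section Existence

lemma exists_norm_le_mul_norm_add_of_lipschitzWith {E : Type*} [SeminormedAddCommGroup E]
    {v : ℝ → E → E} {K : ℝ≥0} {S : Set ℝ} (hS : IsCompact S)
    (hlip : ∀ t ∈ S, LipschitzWith K (v t)) (hcont : ContinuousOn (fun t => v t 0) S) :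
    ∃ M, 0 ≤ M ∧ ∀ t ∈ S, ∀ x, ‖v t x‖ ≤ K * ‖x‖ + M := by
  obtain ⟨M, hM⟩ := hS.exists_bound_of_continuousOn hcont
  refine ⟨max M 0, le_max_right _ _, fun t ht x => ?_⟩
  have hx := (hlip t ht).dist_le_mul x 0
  rw [dist_eq_norm, dist_zero_right] at hx
  linarith [norm_le_norm_sub_add (v t x) (v t 0), hM t ht, le_max_left M 0]

variable {E : Type*} [NormedAddCommGroup E] [NormedSpace ℝ E] {v : ℝ → E → E} {K : ℝ≥0}

theorem exists_isIntegralCurveOn_Icc_of_lipschitzWith [CompleteSpace E] {a b t₀ : ℝ}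
    (hlip : ∀ t ∈ Icc a b, LipschitzWith K (v t))
    (hcont : ∀ x, ContinuousOn (fun t => v t x) (Icc a b)) (ht₀ : t₀ ∈ Icc a b) (x₀ : E) :
    ∃ y, y t₀ = x₀ ∧ IsIntegralCurveOn y v (Icc a b) := by
  obtain ⟨M, hM, hgrowth⟩ :=
    exists_norm_le_mul_norm_add_of_lipschitzWith isCompact_Icc hlip (hcont 0)
  have hab : 0 ≤ b - a := by linarith [ht₀.1, ht₀.2]
  set B := gronwallBound ‖x₀‖ K M (b - a)
  have hB : 0 ≤ B := calc
    0 ≤ gronwallBound ‖x₀‖ K M 0 := by rw [gronwallBound_x0]; exact norm_nonneg _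
    _ ≤ B := gronwallBound_mono (norm_nonneg _) hM K.2 hab
  have hR : 0 < B + 1 := by linarith
  set w : ℝ → E → E := fun t x => v t (radialRetraction (B + 1) x)
  have hw_growth : ∀ t ∈ Icc a b, ∀ x, ‖w t x‖ ≤ K * ‖x‖ + M := fun t ht x =>
    (hgrowth t ht _).trans (by gcongr; rw [norm_radialRetraction hR]; exact min_le_right _ _)
  set L : ℝ≥0 := ⟨K * (B + 1) + M, by positivity⟩
  have hw_bound : ∀ t ∈ Icc a b, ∀ x, ‖w t x‖ ≤ L := fun t ht x =>
    (hgrowth t ht _).trans (by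
      show _ ≤ (K : ℝ) * (B + 1) + M
      gcongr; rw [norm_radialRetraction hR]; exact min_le_left _ _)
  have hPL : IsPicardLindelof w (⟨t₀, ht₀⟩ : Icc a b) x₀ ⟨L * (b - a), by positivity⟩ 0 L
      (K * 2) :=
    { lipschitzOnWith := fun t ht =>
        ((hlip t ht).comp (lipschitzWith_radialRetraction hR)).lipschitzOnWith
      continuousOn := fun x _ => hcont _
      norm_le := fun t ht x _ => hw_bound t ht x
      mul_max_le := by
        rw [NNReal.coe_zero, sub_zero]
        exact mul_le_mul_of_nonneg_left
          (max_le (by linarith [ht₀.1]) (by linarith [ht₀.2])) L.2 }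
  obtain ⟨y, hy₀, hy⟩ := hPL.exists_eq_forall_mem_Icc_hasDerivWithinAt₀
  have hy_norm : ∀ t ∈ Icc a b, ‖y t‖ ≤ B := by
    simpa [hy₀] using IsIntegralCurveOn.norm_le_gronwallBound_Icc_of_mem K.2 hM hy
      (fun t ht => hw_growth t ht _) ht₀
  refine ⟨y, hy₀, fun t ht => ?_⟩
  have hwv : w t (y t) = v t (y t) := by
    simp only [w, radialRetraction_of_norm_le hR (by linarith [hy_norm t ht])]
  simpa [hwv] using hy t ht

end Existence

lemma IsOpen.exists_Icc_subset_of_ordConnected {s : Set ℝ} (hs : IsOpen s) (hs' : s.OrdConnected)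
    {x y : ℝ} (hx : x ∈ s) (hy : y ∈ s) : ∃ a b, Icc a b ⊆ s ∧ x ∈ Ioo a b ∧ y ∈ Ioo a b := by
  obtain ⟨ε, hε, hεs⟩ := Metric.isOpen_iff.1 hs (min x y) (min_rec' (· ∈ s) hx hy)
  obtain ⟨δ, hδ, hδs⟩ := Metric.isOpen_iff.1 hs (max x y) (max_rec' (· ∈ s) hx hy)
  have ha : min x y - ε / 2 ∈ s := hεs (by
    rw [Metric.mem_ball, Real.dist_eq, sub_sub_cancel_left, abs_neg, abs_of_pos (by positivity)]
    linarith)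
  have hb : max x y + δ / 2 ∈ s := hδs (by
    rw [Metric.mem_ball, Real.dist_eq, add_sub_cancel_left, abs_of_pos (by positivity)]
    linarith)
  refine ⟨_, _, hs'.out ha hb, ⟨?_, ?_⟩, ?_, ?_⟩ <;>
    linarith [min_le_left x y, min_le_right x y, le_max_left x y, le_max_right x y]

section Global
variable {E : Type*} [NormedAddCommGroup E] [NormedSpace ℝ E] {v : ℝ → E → E} {s : Set ℝ}
  {t₀ : ℝ}

theorem ODE_solution_unique_of_isOpen_ordConnected (hs : IsOpen s) (hs' : s.OrdConnected)
    (hlip : ∀ a b, Icc a b ⊆ s → ∃ K, ∀ t ∈ Icc a b, LipschitzWith K (v t)) {f g : ℝ → E}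
    (hf : ∀ t ∈ s, HasDerivAt f (v t (f t)) t) (hg : ∀ t ∈ s, HasDerivAt g (v t (g t)) t)
    (ht₀ : t₀ ∈ s) (heq : f t₀ = g t₀) : EqOn f g s := by
  intro t ht
  obtain ⟨a, b, hab, hta, ht₀ab⟩ := hs.exists_Icc_subset_of_ordConnected hs' ht ht₀
  obtain ⟨K, hK⟩ := hlip a b hab
  have hsub : Ioo a b ⊆ s := Ioo_subset_Icc_self.trans hab
  exact ODE_solution_unique_of_mem_Ioo (s := fun _ => univ)
    (fun t ht => (hK t (Ioo_subset_Icc_self ht)).lipschitzOnWith) ht₀ab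
    (fun t ht => ⟨hf t (hsub ht), trivial⟩) (fun t ht => ⟨hg t (hsub ht), trivial⟩) heq hta

theorem ODE_solution_exists_of_isOpen_ordConnected [CompleteSpace E] (hs : IsOpen s)
    (hs' : s.OrdConnected) (hlip : ∀ a b, Icc a b ⊆ s → ∃ K, ∀ t ∈ Icc a b, LipschitzWith K (v t))
    (hcont : ∀ x, ContinuousOn (fun t => v t x) s) (ht₀ : t₀ ∈ s) (x₀ : E) :
    ∃ f : ℝ → E, f t₀ = x₀ ∧ ∀ t ∈ s, HasDerivAt f (v t (f t)) t := by
  have hloc : ∀ r ∈ s, ∃ a b, Icc a b ⊆ s ∧ r ∈ Ioo a b ∧ t₀ ∈ Ioo a b ∧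
      ∃ y : ℝ → E, y t₀ = x₀ ∧ ∀ t ∈ Ioo a b, HasDerivAt y (v t (y t)) t := by
    intro r hr
    obtain ⟨a, b, hab, hra, ht₀ab⟩ := hs.exists_Icc_subset_of_ordConnected hs' hr ht₀
    obtain ⟨K, hK⟩ := hlip a b hab
    obtain ⟨y, hy₀, hy⟩ := exists_isIntegralCurveOn_Icc_of_lipschitzWith hK
      (fun x => (hcont x).mono hab) (Ioo_subset_Icc_self ht₀ab) x₀
    exact ⟨a, b, hab, hra, ht₀ab, y, hy₀, fun t ht =>
      (hy t (Ioo_subset_Icc_self ht)).hasDerivAt (Icc_mem_nhds ht.1 ht.2)⟩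
  choose! a b hab hra ht₀ab y hy₀ hy using hloc
  have hagree : ∀ r ∈ s, ∀ r' ∈ s, r' ∈ Ioo (a r) (b r) → y r' r' = y r r' := by
    intro r hr r' hr' hr'r
    have hsub : Ioo (max (a r) (a r')) (min (b r) (b r')) ⊆ Ioo (a r) (b r) :=
      Ioo_subset_Ioo (le_max_left _ _) (min_le_left _ _)
    have hsub' : Ioo (max (a r) (a r')) (min (b r) (b r')) ⊆ Ioo (a r') (b r') :=
      Ioo_subset_Ioo (le_max_right _ _) (min_le_right _ _)
    refine ODE_solution_unique_of_isOpen_ordConnected isOpen_Ioo ordConnected_Ioo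
      (fun a' b' h => hlip a' b' (h.trans (hsub.trans (Ioo_subset_Icc_self.trans (hab r hr)))))
      (fun t ht => hy r' hr' t (hsub' ht)) (fun t ht => hy r hr t (hsub ht))
      ⟨max_lt (ht₀ab r hr).1 (ht₀ab r' hr').1, lt_min (ht₀ab r hr).2 (ht₀ab r' hr').2⟩
      ((hy₀ r' hr').trans (hy₀ r hr).symm)
      ⟨max_lt hr'r.1 (hra r' hr').1, lt_min hr'r.2 (hra r' hr').2⟩
  refine ⟨fun r => y r r, hy₀ t₀ ht₀, fun r hr => (hy r hr r (hra r hr)).congr_of_eventuallyEq ?_⟩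
  filter_upwards [Ioo_mem_nhds (hra r hr).1 (hra r hr).2] with r' hr'
  exact hagree r hr r' (hab r hr (Ioo_subset_Icc_self hr')) hr'

end Global

section Boost

lemma lipschitzWith_sqrt_one_add_sq : LipschitzWith 1 (fun r : ℝ => √(1 + r ^ 2)) := by
  refine LipschitzWith.of_dist_le_mul fun p q => ?_
  rw [NNReal.coe_one, one_mul, Real.dist_eq, Real.dist_eq]
  have hp : |p| ≤ √(1 + p ^ 2) := Real.abs_le_sqrt (by linarith [sq_nonneg p])
  have hq : |q| ≤ √(1 + q ^ 2) := Real.abs_le_sqrt (by linarith [sq_nonneg q])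
  have hp2 := Real.sq_sqrt (by positivity : (0:ℝ) ≤ 1 + p ^ 2)
  have hq2 := Real.sq_sqrt (by positivity : (0:ℝ) ≤ 1 + q ^ 2)
  have hpos : 0 < √(1 + p ^ 2) := Real.sqrt_pos.2 (by positivity)
  rw [abs_le]
  constructor <;> cases abs_cases p <;> cases abs_cases q <;> cases abs_cases (p - q) <;> nlinarith

lemma exists_lipschitzWith_sqrt_one_add_dotProduct_self (ι : Type*) [Fintype ι] :
    ∃ K, LipschitzWith K (fun x : ι → ℝ => √(1 + x ⬝ᵥ x)) := by
  let e := (EuclideanSpace.equiv ι ℝ).symm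
  have he : ∀ x : ι → ℝ, x ⬝ᵥ x = ‖e x‖ ^ 2 := fun x => by
    rw [EuclideanSpace.norm_sq_eq]
    simp [dotProduct, e, sq]
  simp_rw [he]
  exact ⟨_, lipschitzWith_sqrt_one_add_sq.comp (lipschitzWith_one_norm.comp e.lipschitz)⟩

noncomputable def crossProductCLM : (Fin 3 → ℝ) →L[ℝ] (Fin 3 → ℝ) →L[ℝ] (Fin 3 → ℝ) :=
  LinearMap.toContinuousLinearMap (LinearMap.toContinuousLinearMap.toLinearMap ∘ₗ crossProduct)

lemma crossProductCLM_apply (u w : Fin 3 → ℝ) : crossProductCLM u w = crossProduct u w := rfl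

noncomputable def boostField (s₁ t₁ : ℝ → Fin 3 → ℝ) (r : ℝ) (w : Fin 3 → ℝ) : Fin 3 → ℝ :=
  √(1 + w ⬝ᵥ w) • t₁ r + crossProduct (s₁ r) w

variable {s₁ t₁ : ℝ → Fin 3 → ℝ} {S : Set ℝ}

lemma continuousOn_boostField (hs : ContinuousOn s₁ S) (ht : ContinuousOn t₁ S) (w : Fin 3 → ℝ) :
    ContinuousOn (fun r => boostField s₁ t₁ r w) S := by
  have hcross : Continuous (crossProduct.flip w) := LinearMap.continuous_of_finiteDimensional _
  exact ((continuousOn_const (c := √(1 + w ⬝ᵥ w))).smul ht).add (hcross.comp_continuousOn hs)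

lemma exists_lipschitzWith_boostField (hS : IsCompact S) (hs : ContinuousOn s₁ S)
    (ht : ContinuousOn t₁ S) : ∃ K, ∀ r ∈ S, LipschitzWith K (boostField s₁ t₁ r) := by
  obtain ⟨Kg, hg⟩ := exists_lipschitzWith_sqrt_one_add_dotProduct_self (Fin 3)
  obtain ⟨Ms, hMs⟩ := hS.exists_bound_of_continuousOn hs
  obtain ⟨Mt, hMt⟩ := hS.exists_bound_of_continuousOn ht
  refine ⟨(Kg * Mt + ‖crossProductCLM‖ * Ms).toNNReal, fun r hr =>
    LipschitzWith.of_dist_le' fun x y => ?_⟩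
  have hsplit : boostField s₁ t₁ r x - boostField s₁ t₁ r y
      = (√(1 + x ⬝ᵥ x) - √(1 + y ⬝ᵥ y)) • t₁ r + crossProductCLM (s₁ r) (x - y) := by
    simp only [boostField, crossProductCLM_apply, map_sub, sub_smul]
    abel
  have hgxy : |√(1 + x ⬝ᵥ x) - √(1 + y ⬝ᵥ y)| ≤ Kg * ‖x - y‖ := by
    simpa [Real.dist_eq, dist_eq_norm] using hg.dist_le_mul x y
  rw [dist_eq_norm, dist_eq_norm, hsplit]
  calc _ ≤ |√(1 + x ⬝ᵥ x) - √(1 + y ⬝ᵥ y)| * ‖t₁ r‖ + ‖crossProductCLM‖ * ‖s₁ r‖ * ‖x - y‖ :=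
        (norm_add_le _ _).trans (add_le_add (by rw [norm_smul, Real.norm_eq_abs])
          (crossProductCLM.le_opNorm₂ _ _))
    _ ≤ Kg * ‖x - y‖ * Mt + ‖crossProductCLM‖ * Ms * ‖x - y‖ := by
        gcongr
        · exact hMt r hr
        · exact hMs r hr
    _ = (Kg * Mt + ‖crossProductCLM‖ * Ms) * ‖x - y‖ := by ring

end Boost

/-- global solvability of the boost equation: given continuous
`s₁, t₁ : (0,∞) → ℝ³`, `r₀ > 0` and `w₀ ∈ ℝ³`, there is a unique differentiable
`w : (0,∞) → ℝ³` with `w(r₀) = w₀` and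
`w'(r) = √(1+‖w(r)‖²) t₁(r) + s₁(r) × w(r)` for all `r > 0`. -/
theorem boost_ode_global_solution (s₁ t₁ : ℝ → Fin 3 → ℝ)
    (hs : ContinuousOn s₁ (Set.Ioi 0)) (ht : ContinuousOn t₁ (Set.Ioi 0))
    (r₀ : ℝ) (hr₀ : 0 < r₀) (w₀ : Fin 3 → ℝ) :
    ∃ w : ℝ → Fin 3 → ℝ,
      (w r₀ = w₀ ∧ ∀ r ∈ Set.Ioi (0 : ℝ),
        HasDerivAt w (Real.sqrt (1 + w r ⬝ᵥ w r) • t₁ r + crossProduct (s₁ r) (w r)) r) ∧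
      ∀ w₂ : ℝ → Fin 3 → ℝ,
        (w₂ r₀ = w₀ ∧ ∀ r ∈ Set.Ioi (0 : ℝ),
          HasDerivAt w₂
            (Real.sqrt (1 + w₂ r ⬝ᵥ w₂ r) • t₁ r + crossProduct (s₁ r) (w₂ r)) r) →
        ∀ r ∈ Set.Ioi (0 : ℝ), w₂ r = w r := by
  have hlip : ∀ a b, Icc a b ⊆ Ioi 0 →
      ∃ K, ∀ r ∈ Icc a b, LipschitzWith K (boostField s₁ t₁ r) :=
    fun a b hab => exists_lipschitzWith_boostField isCompact_Icc (hs.mono hab) (ht.mono hab)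
  obtain ⟨w, hw₀, hw⟩ := ODE_solution_exists_of_isOpen_ordConnected isOpen_Ioi ordConnected_Ioi
    hlip (continuousOn_boostField hs ht) hr₀ w₀
  exact ⟨w, ⟨hw₀, hw⟩, fun w₂ ⟨hw₂₀, hw₂⟩ => ODE_solution_unique_of_isOpen_ordConnected
    isOpen_Ioi ordConnected_Ioi hlip hw₂ hw hr₀ (hw₂₀.trans hw₀.symm)⟩
end

section
/- Fix a unit vector θ ∈ ℝ³ and vectors s₁, t₁ ∈ ℝ³, and let w : ℝ → ℝ³ be differentiable at r with w'(r) = √(1+‖w(r)‖²)·t₁ + s₁ × w(r). Writing b = √(1+‖w(r)‖²), f = b + θ^T w(r), and β = r(t₁ − (θ^T t₁)θ) + r θ × s₁, the function ρ(r) = r·(√(1+‖w(r)‖²) + θ^T w(r)) is differentiable at r with ρ'(r) = f·(1 + r θ^T t₁) + w(r)^T β. -/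
/-!
Along `w' = b • t₁ + s₁ ⨯₃ w` the rotational term is orthogonal to `w`, so
`b' = (w ⬝ᵥ w') / b = w ⬝ᵥ t₁`. The term `θ ⬝ᵥ s₁ ⨯₃ w` coming from `(θ ⬝ᵥ w)'` equals
`w ⬝ᵥ θ ⨯₃ s₁` by cyclic invariance of the triple product, and the product rule for
`r * (b + θ ⬝ᵥ w)` gives the formula.
-/

open Matrix

theorem dotProduct_self_nonneg {ι R : Type*} [Fintype ι] [Ring R] [LinearOrder R]
    [IsStrictOrderedRing R] (v : ι → R) : 0 ≤ v ⬝ᵥ v :=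
  Fintype.sum_nonneg fun i => mul_self_nonneg (v i)

theorem HasDerivAt.dotProduct {ι : Type*} [Fintype ι] {f g : ℝ → ι → ℝ} {f' g' : ι → ℝ}
    {x : ℝ} (hf : HasDerivAt f f' x) (hg : HasDerivAt g g' x) :
    HasDerivAt (fun s => f s ⬝ᵥ g s) (f' ⬝ᵥ g x + f x ⬝ᵥ g') x := by
  have hfi := hasDerivAt_pi.mp hf
  have hgi := hasDerivAt_pi.mp hg
  simpa only [_root_.dotProduct, ← Finset.sum_add_distrib] using
    HasDerivAt.fun_sum fun i _ => (hfi i).fun_mul (hgi i)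

theorem HasDerivAt.sqrt_one_add_dotProduct_self {ι : Type*} [Fintype ι] {w : ℝ → ι → ℝ}
    {w' : ι → ℝ} {x : ℝ} (hw : HasDerivAt w w' x) :
    HasDerivAt (fun s => √(1 + w s ⬝ᵥ w s)) (w x ⬝ᵥ w' / √(1 + w x ⬝ᵥ w x)) x := by
  have hpos : 0 < 1 + w x ⬝ᵥ w x := by linarith [dotProduct_self_nonneg (w x)]
  convert ((hw.dotProduct hw).const_add 1).sqrt hpos.ne' using 1
  rw [dotProduct_comm w']
  ring

theorem rho_deriv_general (θ s₁ t₁ : Fin 3 → ℝ)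
    (w : ℝ → Fin 3 → ℝ) (r : ℝ)
    (hw : HasDerivAt w (Real.sqrt (1 + w r ⬝ᵥ w r) • t₁ + crossProduct s₁ (w r)) r) :
    HasDerivAt (fun s => s * (Real.sqrt (1 + w s ⬝ᵥ w s) + θ ⬝ᵥ w s))
      ((Real.sqrt (1 + w r ⬝ᵥ w r) + θ ⬝ᵥ w r) * (1 + r * (θ ⬝ᵥ t₁))
        + w r ⬝ᵥ (r • (t₁ - (θ ⬝ᵥ t₁) • θ) + r • crossProduct θ s₁)) r := by
  set b := √(1 + w r ⬝ᵥ w r) with hb_def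
  have hb : 0 < b := Real.sqrt_pos.mpr (by linarith [dotProduct_self_nonneg (w r)])
  have hb_deriv : HasDerivAt (fun s => √(1 + w s ⬝ᵥ w s)) (w r ⬝ᵥ t₁) r := by
    convert hw.sqrt_one_add_dotProduct_self using 1
    rw [dotProduct_add, dot_cross_self, dotProduct_smul, smul_eq_mul, add_zero, ← hb_def]
    field_simp
  have hθ_deriv : HasDerivAt (fun s => θ ⬝ᵥ w s) (θ ⬝ᵥ (b • t₁ + s₁ ⨯₃ w r)) r := by
    simpa using (hasDerivAt_const r θ).dotProduct hw
  have htriple : θ ⬝ᵥ s₁ ⨯₃ w r = w r ⬝ᵥ θ ⨯₃ s₁ := by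
    rw [triple_product_permutation, triple_product_permutation]
  refine ((hasDerivAt_id' r).fun_mul (hb_deriv.fun_add hθ_deriv)).congr_deriv ?_
  simp only [dotProduct_add, dotProduct_sub, dotProduct_smul, smul_eq_mul, htriple,
    dotProduct_comm θ (w r)]
  ring

/-- if `w'(r) = √(1+‖w(r)‖²) t₁ + s₁ × w(r)`, then
`ρ(r) = r(√(1+‖w(r)‖²) + θᵀw(r))` is differentiable at `r` with
`ρ'(r) = f(1 + r θᵀt₁) + w(r)ᵀβ`, where `f = b + θᵀw(r)` and
`β = r(t₁ − (θᵀt₁)θ) + r θ×s₁`. -/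
theorem rho_deriv (θ s₁ t₁ : Fin 3 → ℝ) (hθ : Real.sqrt (θ ⬝ᵥ θ) = 1)
    (w : ℝ → Fin 3 → ℝ) (r : ℝ)
    (hw : HasDerivAt w (Real.sqrt (1 + w r ⬝ᵥ w r) • t₁ + crossProduct s₁ (w r)) r) :
    HasDerivAt (fun s => s * (Real.sqrt (1 + w s ⬝ᵥ w s) + θ ⬝ᵥ w s))
      ((Real.sqrt (1 + w r ⬝ᵥ w r) + θ ⬝ᵥ w r) * (1 + r * (θ ⬝ᵥ t₁))
        + w r ⬝ᵥ (r • (t₁ - (θ ⬝ᵥ t₁) • θ) + r • crossProduct θ s₁)) r :=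
  rho_deriv_general θ s₁ t₁ w r hw
end

section
/- (Angularity of the transported vector Γ̃.) Let w ∈ ℝ³, let θ ∈ ℝ³ with ‖θ‖ = 1, set b = √(1+‖w‖²), W = I + ww^T/(b+1), f = b + θ^T w, Θ = I − θθ^T, A = I − f^{-1}(θ + (b+1)^{-1}w)w^T, and ζ = f^{-1}R(w + Wθ) for a 3×3 matrix R with R^T R = I. If g ∈ ℝ³ satisfies ζ^T g = 0, then the vector A^{-1} R^T g = (W + θw^T) R^T g satisfies θ^T((W + θw^T) R^T g) = 0 (i.e. it is tangent to the sphere at θ) and (W + θw^T) R^T g = Θ A^T R^T g. -/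
open Matrix

lemma vmv_mulVec (a c u : Fin 3 → ℝ) : vecMulVec a c *ᵥ u = (c ⬝ᵥ u) • a := by
  ext i
  simp only [vecMulVec_apply, mulVec, dotProduct, Pi.smul_apply, smul_eq_mul]
  rw [Finset.sum_mul]
  exact Finset.sum_congr rfl fun j _ => by ring

lemma vmv_transpose_s19 (a c : Fin 3 → ℝ) : (vecMulVec a c)ᵀ = vecMulVec c a := by
  ext i j; simp [vecMulVec_apply, transpose_apply, mul_comm]

/-- angularity of the transported vector `Γ̃`: with
`ζ = f⁻¹R(w + Wθ)` and `R` orthogonal, if `ζᵀg = 0` then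
`A⁻¹Rᵀg = (W + θwᵀ)Rᵀg` is tangent to the sphere at `θ`, and
`(W + θwᵀ)Rᵀg = Θ Aᵀ Rᵀ g`. -/
theorem transported_gamma_angular (w θ g : Fin 3 → ℝ)
    (hθ : Real.sqrt (θ ⬝ᵥ θ) = 1)
    (R : Matrix (Fin 3) (Fin 3) ℝ) (hR : Rᵀ * R = 1)
    (hg : ((fOf θ w)⁻¹ • (R *ᵥ (w + WOf w *ᵥ θ))) ⬝ᵥ g = 0) :
    θ ⬝ᵥ ((WOf w + vecMulVec θ w) *ᵥ (Rᵀ *ᵥ g)) = 0 ∧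
    (WOf w + vecMulVec θ w) *ᵥ (Rᵀ *ᵥ g)
      = ThetaOf θ *ᵥ ((AOf θ w)ᵀ *ᵥ (Rᵀ *ᵥ g)) := by
  have hww : (0:ℝ) ≤ w ⬝ᵥ w := Finset.sum_nonneg fun i _ => mul_self_nonneg _
  have hθθ : θ ⬝ᵥ θ = 1 := by
    have h0 : (0:ℝ) ≤ θ ⬝ᵥ θ := Finset.sum_nonneg fun i _ => mul_self_nonneg _
    have := Real.sq_sqrt h0
    rw [hθ] at this; nlinarith
  set b := bOf w with hbdef
  have hb0 : 0 ≤ b := Real.sqrt_nonneg _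
  have hb2 : b ^ 2 = 1 + w ⬝ᵥ w := Real.sq_sqrt (by linarith)
  have hb1 : 1 ≤ b := by nlinarith
  have hbp : (0:ℝ) < b + 1 := by linarith
  have hbne : b + 1 ≠ 0 := ne_of_gt hbp
  set t := θ ⬝ᵥ w with htdef
  have hcs : t ^ 2 ≤ (θ ⬝ᵥ θ) * (w ⬝ᵥ w) := by
    have := Finset.sum_mul_sq_le_sq_mul_sq Finset.univ θ w
    simpa [dotProduct, sq, htdef] using this
  have hcs' : t ^ 2 ≤ b ^ 2 - 1 := by rw [hθθ] at hcs; nlinarith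
  have hf : 0 < fOf θ w := by
    have : 0 < b + t := by nlinarith [sq_nonneg (t + b)]
    simpa [fOf, htdef, hbdef] using this
  have hfne : fOf θ w ≠ 0 := ne_of_gt hf
  set u := Rᵀ *ᵥ g with hudef
  set α := θ ⬝ᵥ u with hαdef
  set β := w ⬝ᵥ u with hβdef
  -- the orthogonality hypothesis transferred to `u`
  have h1 : (w + WOf w *ᵥ θ) ⬝ᵥ u = 0 := by
    rw [smul_dotProduct, smul_eq_mul, mul_eq_zero] at hg
    rcases hg with h | h
    · exact absurd h (inv_ne_zero hfne)
    · rw [dotProduct_comm, dotProduct_mulVec, ← mulVec_transpose, ← hudef,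
        dotProduct_comm] at h
      exact h
  have hWθ : WOf w *ᵥ θ = θ + ((b + 1)⁻¹ * t) • w := by
    rw [WOf, add_mulVec, one_mulVec, smul_mulVec, vmv_mulVec,
      dotProduct_comm w θ, ← htdef, smul_smul, ← hbdef]
  have h1' : β + (α + (b + 1)⁻¹ * t * β) = 0 := by
    rw [hWθ] at h1
    simpa [add_dotProduct, dotProduct_add, smul_dotProduct, dotProduct_smul,
      dotProduct_comm w θ, ← htdef, ← hαdef, ← hβdef, mul_assoc] using h1
  -- expand the left-hand side
  have hL : (WOf w + vecMulVec θ w) *ᵥ u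
      = u + ((b + 1)⁻¹ * β) • w + β • θ := by
    rw [add_mulVec, vmv_mulVec, ← hβdef, WOf, add_mulVec, one_mulVec,
      smul_mulVec, vmv_mulVec, ← hβdef, smul_smul, ← hbdef]
  -- expand `Aᵀ u`
  set γ : ℝ := α + (b + 1)⁻¹ * β with hγdef
  have hA : (AOf θ w)ᵀ *ᵥ u = u - ((fOf θ w)⁻¹ * γ) • w := by
    rw [AOf, transpose_sub, transpose_one, transpose_smul, vmv_transpose_s19,
      sub_mulVec, one_mulVec, smul_mulVec, vmv_mulVec, smul_smul, ← hbdef]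
    congr 2
    rw [hγdef, add_dotProduct, smul_dotProduct, ← hαdef, ← hβdef, smul_eq_mul]
  have hTh : ∀ v : Fin 3 → ℝ, ThetaOf θ *ᵥ v = v - (θ ⬝ᵥ v) • θ := by
    intro v
    rw [ThetaOf, sub_mulVec, one_mulVec, vmv_mulVec]
  set s : ℝ := (fOf θ w)⁻¹ * γ with hsdef
  have hθA : θ ⬝ᵥ ((AOf θ w)ᵀ *ᵥ u) = α - s * t := by
    rw [hA, dotProduct_sub, dotProduct_smul, smul_eq_mul, ← hαdef, ← htdef]
  -- scalar identities
  have hfeq : fOf θ w = b + t := by rw [fOf, ← hbdef, ← htdef]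
  have hbt : b + t ≠ 0 := by rw [← hfeq]; exact hfne
  have hc : (b + 1) * (b + 1)⁻¹ = 1 := mul_inv_cancel₀ hbne
  have hfi : (b + t) * (b + t)⁻¹ = 1 := mul_inv_cancel₀ hbt
  have h1'' : β * (b + 1) + α * (b + 1) + t * β = 0 := by
    linear_combination (b + 1) * h1' - (t * β) * hc
  have hγ2 : (b + 1) * γ = -(β * (b + t)) := by
    rw [hγdef]; linear_combination h1'' + β * hc
  have hs1 : (b + 1) * s = -β := by
    rw [hsdef, hfeq]
    linear_combination (b + t)⁻¹ * hγ2 - β * hfi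
  have e1 : (b + 1)⁻¹ * β = -s := by
    linear_combination (b + 1)⁻¹ * hs1 - s * hc
  have e2 : β = -(α - s * t) := by
    have hs2 : s = -((b + 1)⁻¹ * β) := by linarith [e1]
    rw [hs2]
    linear_combination h1'
  constructor
  · rw [hL, dotProduct_add, dotProduct_add, dotProduct_smul, dotProduct_smul,
      ← hαdef, ← htdef, hθθ]
    simp only [smul_eq_mul]
    linear_combination h1'
  · rw [hL, hTh, hθA, hA, e1, e2]
    simp only [neg_smul, sub_eq_add_neg]
    try abel
end
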